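/- arXiv:2006.01808 — 2 statements merged into one kernel-verified Lean document; each statement's English description precedes it below -/
import Mathlib

section
/- Suppose n = 2 and v_i > v_j (heterogeneous values). Let f be the CSF with f_i(x) = 𝟙[x_i = v_i] (and f_j(x) = 1 − f_i(x)). Then the tuple x* with x*_i = v_i and x*_j = 0 is a Nash equilibrium with aggregate effort equal to v_i = max value. -/
open Finset

noncomputable def payoff {N : Type*} (f : (N → ℝ) → N → ℝ) (v : N → ℝ)
    (x : N → ℝ) (i : N) : ℝ := f x i * v i - x i

/-- Pure-strategy Nash equilibrium of the contest game with strategy sets ℝ≥0. -/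
def IsNash {N : Type*} [DecidableEq N] (f : (N → ℝ) → N → ℝ) (v : N → ℝ)
    (x : N → ℝ) : Prop :=
  (∀ i, 0 ≤ x i) ∧
  ∀ i : N, ∀ y : ℝ, 0 ≤ y →
    payoff f v (Function.update x i y) i ≤ payoff f v x i

/-- `f` is a contest success function: on nonnegative effort tuples it returns a
probability vector over contestants. -/
def IsCSF {N : Type*} [Fintype N] (f : (N → ℝ) → N → ℝ) : Prop :=
  ∀ x : N → ℝ, (∀ i, 0 ≤ x i) →
    (∀ i, 0 ≤ f x i) ∧ ∑ i, f x i = 1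

/-
The winner `i` bids exactly its value and gets payoff `0`. Under this CSF any bid of `i` other than
`v i` wins nothing, so no deviation of `i` earns more than `0`. As long as `i` bids `v i`, the other
contestant `j` loses with certainty, so any positive bid of `j` only costs it.
-/

lemma Finset.univ_eq_pair_of_card_eq_two {N : Type*} [Fintype N] [DecidableEq N]
    (hcard : Fintype.card N = 2) {i j : N} (hij : i ≠ j) : (univ : Finset N) = {i, j} :=
  (eq_univ_of_card {i, j} (by rw [card_pair hij, hcard])).symm

lemma update_nonneg {N α : Type*} [DecidableEq N] [Preorder α] [Zero α] {x : N → α}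
    (hx : ∀ l, 0 ≤ x l) (k : N) {y : α} (hy : 0 ≤ y) : ∀ l, 0 ≤ Function.update x k y l :=
  le_update_iff.2 ⟨hy, fun l _ => hx l⟩

section ThresholdCSF

variable {N : Type*} {f : (N → ℝ) → N → ℝ} {v : N → ℝ} {i j : N}

lemma payoff_nonpos_of_winProb_eq_ite {x : N → ℝ} (hx : 0 ≤ x i)
    (hfx : f x i = if x i = v i then 1 else 0) : payoff f v x i ≤ 0 := by
  unfold payoff
  split_ifs at hfx with hxv <;> rw [hfx] <;> linarith

lemma payoff_eq_neg_of_winProb_eq_zero {x : N → ℝ} (hfx : f x j = 0) :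
    payoff f v x j = -x j := by
  simp [payoff, hfx]

lemma winProb_eq_zero_of_rival_bids_value
    (hfi : ∀ x : N → ℝ, (∀ l, 0 ≤ x l) → f x i = if x i = v i then 1 else 0)
    (hfj : ∀ x : N → ℝ, (∀ l, 0 ≤ x l) → f x j = 1 - f x i)
    {x : N → ℝ} (hx : ∀ l, 0 ≤ x l) (hxi : x i = v i) : f x j = 0 := by
  rw [hfj x hx, hfi x hx, if_pos hxi, sub_self]

end ThresholdCSF

theorem stmt_6_general {N : Type*} [Fintype N] [DecidableEq N]
    (hcard : Fintype.card N = 2)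
    (i j : N) (hij : i ≠ j)
    (v : N → ℝ) (hvj : 0 < v j) (hvij : v j < v i)
    (f : (N → ℝ) → N → ℝ)
    (hfi : ∀ x : N → ℝ, (∀ l, 0 ≤ x l) → f x i = if x i = v i then 1 else 0)
    (hfj : ∀ x : N → ℝ, (∀ l, 0 ≤ x l) → f x j = 1 - f x i)
    (xs : N → ℝ) (hxs : xs = fun l => if l = i then v i else 0) :
    IsNash f v xs ∧ ∑ l, xs l = v i := by
  have huniv := univ_eq_pair_of_card_eq_two hcard hij
  have hxi : xs i = v i := by simp [hxs]
  have hxj : xs j = 0 := by simp [hxs, hij.symm]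
  have hxs_nonneg : ∀ l, 0 ≤ xs l := by
    intro l
    rcases eq_or_ne l i with rfl | hl
    · rw [hxi]; linarith
    · simp [hxs, hl]
  have hpayoff_i : payoff f v xs i = 0 := by simp [payoff, hfi xs hxs_nonneg, hxi]
  have hpayoff_j : payoff f v xs j = 0 := by
    rw [payoff_eq_neg_of_winProb_eq_zero
      (winProb_eq_zero_of_rival_bids_value hfi hfj hxs_nonneg hxi), hxj, neg_zero]
  refine ⟨⟨hxs_nonneg, fun k y hy => ?_⟩, ?_⟩
  · have hx' := update_nonneg hxs_nonneg k hy
    have hk : k = i ∨ k = j := by simpa [huniv] using mem_univ k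
    rcases hk with rfl | rfl
    · rw [hpayoff_i]
      exact payoff_nonpos_of_winProb_eq_ite (hx' k) (hfi _ hx')
    · have hfj' := winProb_eq_zero_of_rival_bids_value hfi hfj hx'
        (by rw [Function.update_of_ne hij, hxi])
      rw [hpayoff_j, payoff_eq_neg_of_winProb_eq_zero hfj', Function.update_self]
      linarith
  · rw [huniv, sum_pair hij, hxi, hxj, add_zero]

theorem stmt_6 {N : Type*} [Fintype N] [DecidableEq N]
    (hcard : Fintype.card N = 2)
    (i j : N) (hij : i ≠ j)
    (v : N → ℝ) (hvj : 0 < v j) (hvij : v j < v i)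
    (f : (N → ℝ) → N → ℝ) (hf : IsCSF f)
    (hfi : ∀ x : N → ℝ, (∀ l, 0 ≤ x l) → f x i = if x i = v i then 1 else 0)
    (hfj : ∀ x : N → ℝ, (∀ l, 0 ≤ x l) → f x j = 1 - f x i)
    (xs : N → ℝ) (hxs : xs = fun l => if l = i then v i else 0) :
    IsNash f v xs ∧ ∑ l, xs l = v i :=
  stmt_6_general hcard i j hij v hvj hvij f hfi hfj xs hxs
end

section
/- For any CSF f that does not depend on the value tuple, there exists a value tuple v under which f is not extractive: i.e., there is no Nash equilibrium of the contest (f, v) whose aggregate effort equals the maximum value. -/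
/-!
Give contestant `j` the prize `2` and everybody else `1`, where `j` is a contestant who wins with
positive probability when nobody exerts effort. At a Nash equilibrium every payoff is nonnegative,
since exerting no effort is always available, so the aggregate effort is at most the expected prize
`∑ i, f x i * v i`, which is at most `v j`. If the effort equals `v j`, both bounds are tight: all
probability sits on the unique maximiser `j`, the others exert no effort, and `j` bids `v j` for a
payoff of `0`. Dropping to `0` effort then earns `j` the payoff `f 0 j * v j > 0`.
-/

open Finset

section Contest

variable {N : Type*} [Fintype N] {f : (N → ℝ) → N → ℝ} {v x : N → ℝ}

theorem IsCSF.exists_pos (hf : IsCSF f) (x : N → ℝ) (hx : ∀ i, 0 ≤ x i) : ∃ i, 0 < f x i := by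
  have hlt : ∑ _i : N, (0 : ℝ) < ∑ i, f x i := by simp [(hf x hx).2]
  obtain ⟨i, -, hi⟩ := exists_lt_of_sum_lt hlt
  exact ⟨i, hi⟩

theorem IsCSF.le_one (hf : IsCSF f) (hx : ∀ i, 0 ≤ x i) (i : N) : f x i ≤ 1 := by
  obtain ⟨hnonneg, hsum⟩ := hf x hx
  exact hsum ▸ single_le_sum (fun k _ => hnonneg k) (mem_univ i)

variable [DecidableEq N]

theorem IsNash.payoff_nonneg (hf : IsCSF f) (hx : IsNash f v x) {i : N} (hv : 0 ≤ v i) :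
    0 ≤ payoff f v x i := by
  have hdev_nonneg : (0 : N → ℝ) ≤ Function.update x i 0 :=
    le_update_iff.2 ⟨le_rfl, fun k _ => hx.1 k⟩
  calc 0 ≤ f (Function.update x i 0) i * v i :=
        mul_nonneg ((hf _ hdev_nonneg).1 i) hv
    _ = payoff f v (Function.update x i 0) i := by simp [payoff]
    _ ≤ payoff f v x i := hx.2 i 0 le_rfl

theorem IsNash.eq_zero_of_sum_eq_max (hf : IsCSF f) (hv : ∀ i, 0 ≤ v i) {j : N}
    (hj : ∀ i ≠ j, v i < v j) (hx : IsNash f v x) (hsum : ∑ i, x i = v j) {i : N} (hi : i ≠ j) :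
    x i = 0 := by
  obtain ⟨hf_nonneg, hf_sum⟩ := hf x hx.1
  have hx_le : ∀ k, x k ≤ f x k * v k := fun k =>
    sub_nonneg.mp (hx.payoff_nonneg hf (hv k))
  have hloss_nonneg : ∀ k, 0 ≤ f x k * (v j - v k) := fun k => by
    rcases eq_or_ne k j with rfl | hk
    · simp
    · exact mul_nonneg (hf_nonneg k) (sub_nonneg.mpr (hj k hk).le)
  have hfi : f x i * (v j - v i) ≤ 0 :=
    calc f x i * (v j - v i) ≤ ∑ k, f x k * (v j - v k) :=
          single_le_sum (fun k _ => hloss_nonneg k) (mem_univ i)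
      _ = v j - ∑ k, f x k * v k := by
          simp only [mul_sub, sum_sub_distrib, ← sum_mul, hf_sum, mul_one, mul_comm]
      _ ≤ v j - ∑ k, x k := sub_le_sub_left (sum_le_sum fun k _ => hx_le k) _
      _ = 0 := by rw [hsum, sub_self]
  have hfi_zero : f x i = 0 :=
    le_antisymm (nonpos_of_mul_nonpos_left hfi (sub_pos.mpr (hj i hi))) (hf_nonneg i)
  exact le_antisymm (by simpa [hfi_zero] using hx_le i) (hx.1 i)

theorem not_isNash_of_sum_eq_max (hf : IsCSF f) (hv : ∀ i, 0 ≤ v i) {j : N}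
    (hj : ∀ i ≠ j, v i < v j) (hj0 : 0 < f 0 j * v j) (hx : IsNash f v x) :
    ∑ i, x i ≠ v j := by
  intro hsum
  have hx_off : Function.update x j 0 = 0 := by
    funext i
    rcases eq_or_ne i j with rfl | hi
    · simp
    · simp [hi, hx.eq_zero_of_sum_eq_max hf hv hj hsum hi]
  have hxj : x j = v j := by
    rw [← hsum, ← add_sum_erase _ _ (mem_univ j),
      sum_eq_zero fun i hi => hx.eq_zero_of_sum_eq_max hf hv hj hsum (ne_of_mem_erase hi),
      add_zero]
  have hdev := hx.2 j 0 le_rfl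
  simp only [payoff, hx_off, Pi.zero_apply, sub_zero, hxj] at hdev
  have hwin : f x j * v j ≤ v j := mul_le_of_le_one_left (hv j) (hf.le_one hx.1 j)
  linarith

end Contest

theorem stmt_9_general {N : Type*} [Fintype N] [DecidableEq N]
    (hne : (Finset.univ : Finset N).Nonempty)
    (f : (N → ℝ) → N → ℝ) (hf : IsCSF f) :
    ∃ v : N → ℝ, (∀ i, 0 < v i) ∧
      ¬ ∃ x : N → ℝ, IsNash f v x ∧ ∑ i, x i = Finset.univ.sup' hne v := by
  obtain ⟨j, hj0⟩ := hf.exists_pos 0 fun _ => le_rfl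
  set v : N → ℝ := Function.update (fun _ => 1) j 2
  have hv_off : ∀ i ≠ j, v i < v j := fun i hi => by simp [v, hi]
  have hv_pos : ∀ i, 0 < v i := fun i => by
    rcases eq_or_ne i j with rfl | hi <;> simp [v, *]
  have hsup : univ.sup' hne v = v j :=
    le_antisymm (sup'_le hne v fun i _ => by
      rcases eq_or_ne i j with rfl | hi
      exacts [le_rfl, (hv_off i hi).le]) (le_sup' v (mem_univ j))
  refine ⟨v, hv_pos, ?_⟩
  rintro ⟨x, hx, hsum⟩
  exact not_isNash_of_sum_eq_max hf (fun i => (hv_pos i).le) hv_off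
    (mul_pos hj0 (hv_pos j)) hx (hsum.trans hsup)

theorem stmt_9 {N : Type*} [Fintype N] [DecidableEq N]
    (hcard : 2 ≤ Fintype.card N)
    (hne : (Finset.univ : Finset N).Nonempty)
    (f : (N → ℝ) → N → ℝ) (hf : IsCSF f) :
    ∃ v : N → ℝ, (∀ i, 0 < v i) ∧
      ¬ ∃ x : N → ℝ, IsNash f v x ∧ ∑ i, x i = Finset.univ.sup' hne v :=
  stmt_9_general hne f hf
end
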